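/- Suppose f : ℕ → ℕ satisfies f(m) = ∑_{w : w^m = 1} g(w) for a function g : S^1 → ℕ that is Riemann-integrable and bounded. Then lim_{m→∞} f(m)/m = (1/2π) ∫_0^{2π} g(e^{iθ}) dθ. -/

import Mathlib

/-!
With `ζ = e^{2πi/m}`, `f(m)/m` is `1/2π` times the left Riemann sum of `θ ↦ g(e^{iθ})` on
`[0, 2π]` for the uniform partition into `m` pieces. Such a Riemann sum is the integral of the
step function obtained by evaluating at the nearest grid point to the left (`gridFloor`). These
step functions are uniformly bounded and converge to the integrand at each of its continuity
points, i.e. almost everywhere, so dominated convergence finishes.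
-/

open MeasureTheory Filter Topology Set

theorem IsPrimitiveRoot.sum_nthRootsFinset_one {R M : Type*} [CommRing R] [IsDomain R]
    [AddCommMonoid M] {ζ : R} {m : ℕ} (hζ : IsPrimitiveRoot ζ m) (φ : R → M) :
    ∑ w ∈ Polynomial.nthRootsFinset m (1 : R), φ w
      = ∑ k ∈ Finset.range m, φ (ζ ^ k) := by
  rcases Nat.eq_zero_or_pos m with rfl | hm
  · simp
  refine (Finset.sum_nbij (ζ ^ ·) (fun k _ => ?_) hζ.injOn_pow (fun w hw => ?_)
    (fun _ _ => rfl)).symm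
  · exact (Polynomial.mem_nthRootsFinset hm 1).2
      (by rw [← pow_mul, mul_comm, pow_mul, hζ.pow_eq_one, one_pow])
  · have : NeZero m := ⟨hm.ne'⟩
    obtain ⟨k, hk, rfl⟩ := hζ.eq_pow_of_pow_eq_one ((Polynomial.mem_nthRootsFinset hm 1).1 hw)
    exact ⟨k, Finset.mem_coe.2 (Finset.mem_range.2 hk), rfl⟩

noncomputable def gridFloor (a δ x : ℝ) : ℝ := a + ⌊(x - a) / δ⌋ * δ

section gridFloor

variable {a δ x : ℝ}

theorem gridFloor_le (hδ : 0 < δ) : gridFloor a δ x ≤ x := by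
  have := Int.floor_le ((x - a) / δ)
  rw [le_div_iff₀ hδ] at this
  unfold gridFloor; linarith

theorem sub_lt_gridFloor (hδ : 0 < δ) : x - δ < gridFloor a δ x := by
  have := Int.sub_one_lt_floor ((x - a) / δ)
  rw [sub_lt_iff_lt_add, div_lt_iff₀ hδ] at this
  unfold gridFloor; linarith

theorem le_gridFloor (hδ : 0 < δ) (hx : a ≤ x) : a ≤ gridFloor a δ x := by
  have : (0 : ℝ) ≤ ⌊(x - a) / δ⌋ := by
    exact_mod_cast Int.floor_nonneg.2 (div_nonneg (sub_nonneg.2 hx) hδ.le)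
  unfold gridFloor; nlinarith

theorem gridFloor_eq_of_mem_Ico (hδ : 0 < δ) {k : ℤ}
    (hx : x ∈ Ico (a + k * δ) (a + (k + 1) * δ)) :
    gridFloor a δ x = a + k * δ := by
  have : ⌊(x - a) / δ⌋ = k := by
    rw [Int.floor_eq_iff, le_div_iff₀ hδ, div_lt_iff₀ hδ]
    constructor <;> linarith [hx.1, hx.2]
  rw [gridFloor, this]

theorem stronglyMeasurable_comp_gridFloor {β : Type*} [TopologicalSpace β] (h : ℝ → β) :
    StronglyMeasurable fun x => h (gridFloor a δ x) :=
  (StronglyMeasurable.of_discrete (f := fun k : ℤ => h (a + k * δ))).comp_measurable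
    (Int.measurable_floor.comp ((measurable_id.sub_const a).div_const δ))

theorem tendsto_gridFloor {ι : Type*} {l : Filter ι} {δ : ι → ℝ}
    (hδ : Tendsto δ l (𝓝[>] 0)) :
    Tendsto (fun i => gridFloor a (δ i) x) l (𝓝 x) := by
  have hpos : ∀ᶠ i in l, 0 < δ i := hδ.eventually self_mem_nhdsWithin
  refine tendsto_of_tendsto_of_tendsto_of_le_of_le' (g := fun i => x - δ i) ?_ tendsto_const_nhds
    (hpos.mono fun i hi => (sub_lt_gridFloor hi).le) (hpos.mono fun i hi => gridFloor_le hi)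
  simpa using (tendsto_nhdsWithin_iff.1 hδ).1.const_sub x

theorem integral_comp_gridFloor {E : Type*} [NormedAddCommGroup E] [NormedSpace ℝ E]
    [CompleteSpace E] (h : ℝ → E) (hδ : 0 < δ) (m : ℕ) :
    ∫ x in a..a + m * δ, h (gridFloor a δ x)
      = ∑ k ∈ Finset.range m, δ • h (a + k * δ) := by
  have heqOn : ∀ k : ℕ, EqOn (fun x => h (gridFloor a δ x)) (fun _ => h (a + k * δ))
      (uIoo (a + k * δ) (a + (k + 1 : ℕ) * δ)) := by
    intro k x hx
    rw [uIoo_of_le (by push_cast; linarith)] at hx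
    have := gridFloor_eq_of_mem_Ico (a := a) hδ (k := k) ⟨hx.1.le, by exact_mod_cast hx.2⟩
    simp only [this, Int.cast_natCast]
  have hpiece : ∀ k : ℕ, ∫ x in a + k * δ..a + (k + 1 : ℕ) * δ, h (gridFloor a δ x)
      = δ • h (a + k * δ) := by
    intro k
    rw [intervalIntegral.integral_congr_uIoo (heqOn k), intervalIntegral.integral_const]
    congr 1; push_cast; ring
  have hint : ∀ k < m, IntervalIntegrable (fun x => h (gridFloor a δ x)) volume
      (a + k * δ) (a + (k + 1 : ℕ) * δ) :=
    fun k _ => intervalIntegrable_const.congr_uIoo (heqOn k).symm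
  have hadjacent :=
    intervalIntegral.sum_integral_adjacent_intervals (a := fun k : ℕ => a + k * δ) hint
  simp only [hpiece, Nat.cast_zero, zero_mul, add_zero] at hadjacent
  exact hadjacent.symm

end gridFloor

theorem tendsto_const_div_natCast_nhdsGT_zero {c : ℝ} (hc : 0 < c) :
    Tendsto (fun m : ℕ => c / m) atTop (𝓝[>] 0) := by
  refine tendsto_nhdsWithin_iff.2 ⟨tendsto_const_div_atTop_nhds_zero_nat c, ?_⟩
  filter_upwards [eventually_gt_atTop 0] with m hm
  exact div_pos hc (Nat.cast_pos.2 hm)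

theorem tendsto_sum_riemann_of_ae_continuousAt {E : Type*} [NormedAddCommGroup E]
    [NormedSpace ℝ E] [CompleteSpace E] {h : ℝ → E} {a b C : ℝ} (hab : a < b)
    (hC : ∀ x ∈ Icc a b, ‖h x‖ ≤ C)
    (hcont : ∀ᵐ x, x ∈ Ioo a b → ContinuousAt h x) :
    Tendsto (fun m : ℕ => ∑ k ∈ Finset.range m, ((b - a) / m) • h (a + k * ((b - a) / m)))
      atTop (𝓝 (∫ x in a..b, h x)) := by
  have hδ := tendsto_const_div_natCast_nhdsGT_zero (sub_pos.2 hab)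
  have hpos : ∀ᶠ m : ℕ in atTop, 0 < (b - a) / m := hδ.eventually self_mem_nhdsWithin
  have hsum : ∀ᶠ m : ℕ in atTop, ∫ x in a..b, h (gridFloor a ((b - a) / m) x)
      = ∑ k ∈ Finset.range m, ((b - a) / m) • h (a + k * ((b - a) / m)) := by
    filter_upwards [hpos] with m hm
    have hm0 : (m : ℝ) ≠ 0 := by rintro h0; simp [h0] at hm
    rw [← integral_comp_gridFloor h hm m, mul_div_cancel₀ _ hm0, add_sub_cancel]
  refine Tendsto.congr' hsum (intervalIntegral.tendsto_integral_filter_of_dominated_convergence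
    (fun _ => C) (.of_forall fun _ => (stronglyMeasurable_comp_gridFloor h).aestronglyMeasurable)
    ?_ intervalIntegrable_const ?_)
  · filter_upwards [hpos] with m hm
    refine .of_forall fun x hx => hC _ ⟨le_gridFloor hm ?_, (gridFloor_le hm).trans ?_⟩
    all_goals rw [uIoc_of_le hab.le] at hx
    exacts [hx.1.le, hx.2]
  · filter_upwards [hcont, Measure.ae_ne volume b] with x hx hxb hmem
    rw [uIoc_of_le hab.le] at hmem
    exact (hx ⟨hmem.1, lt_of_le_of_ne hmem.2 hxb⟩).tendsto.comp (tendsto_gridFloor hδ)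

/-- Existence of the mean index: if `f(m) = ∑_{w^m = 1} g(w)` for a bounded,
Riemann-integrable (i.e. bounded and almost everywhere continuous) function `g` on the
circle, then `f(m)/m → (1/2π) ∫₀^{2π} g(e^{iθ}) dθ`. -/
theorem stmt_18 (f : ℕ → ℕ) (g : ℂ → ℕ)
    (hsum : ∀ m : ℕ, 1 ≤ m →
      (f m : ℝ) = ∑ w ∈ Polynomial.nthRootsFinset m (1 : ℂ), (g w : ℝ))
    (hbdd : ∃ C : ℕ, ∀ w : ℂ, ‖w‖ = 1 → g w ≤ C)
    (hcont : ∀ᵐ θ : ℝ ∂volume,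
      ContinuousAt (fun t : ℝ => (g (Complex.exp (t * Complex.I)) : ℝ)) θ) :
    Filter.Tendsto (fun m : ℕ => (f m : ℝ) / m) Filter.atTop
      (nhds ((1 / (2 * Real.pi)) *
        ∫ θ in (0 : ℝ)..(2 * Real.pi), (g (Complex.exp (θ * Complex.I)) : ℝ))) := by
  obtain ⟨C, hC⟩ := hbdd
  have hriemann := tendsto_sum_riemann_of_ae_continuousAt (C := C) Real.two_pi_pos
    (fun t _ => by simpa using hC _ (Complex.norm_exp_ofReal_mul_I t))
    (hcont.mono fun _ hθ _ => hθ)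
  simp only [sub_zero, zero_add] at hriemann
  refine (hriemann.const_mul (1 / (2 * Real.pi))).congr' ?_
  filter_upwards [eventually_ge_atTop 1] with m hm
  have hm0 : m ≠ 0 := Nat.one_le_iff_ne_zero.1 hm
  rw [hsum m hm, (Complex.isPrimitiveRoot_exp m hm0).sum_nthRootsFinset_one, Finset.mul_sum,
    Finset.sum_div]
  refine Finset.sum_congr rfl fun k _ => ?_
  have hangle : (k : ℂ) * (2 * Real.pi * Complex.I / m)
      = ((k * (2 * Real.pi / m) : ℝ) : ℂ) * Complex.I := by
    push_cast; ring
  rw [← Complex.exp_nat_mul, hangle, smul_eq_mul]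
  field_simp
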